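/- arXiv:1307.1512 — 3 statements merged into one kernel-verified Lean document; each statement's English description precedes it below -/
import Mathlib

section
/- Let V ⊆ ℝ^{2m} be an n-dimensional subspace that is α-slant with α ≠ π/2 with respect to a compatible complex structure J₀ (i.e., for every nonzero X ∈ V, the angle between J₀X and V equals α; equivalently ‖π_V(J₀X)‖ = cos(α)‖X‖ for all X ∈ V). Then J_V := sec(α)·(π_V ∘ J₀|_V) is a complex structure on V compatible with the induced inner product (J_V² = -I and J_V preserves the inner product). In particular, n is even. -/
open scoped RealInnerProductSpace

/-! For `X, Y ∈ V`, `⟪π_V J₀ X, Y⟫ = ⟪J₀ X, Y⟫`, so the compression `P = π_V ∘ J₀|_V` inherits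
the skew-symmetry of `J₀`. The slant condition says `P` is `cos α` times an isometry, so
`J_V = sec α · P` is a skew-symmetric isometry, whence `⟪J_V² X, Y⟫ = -⟪J_V X, J_V Y⟫ = -⟪X, Y⟫`.
Finally `det (J_V)² = det (-1) = (-1)^{dim V}` is a square, so `dim V` is even. -/

theorem even_finrank_of_comp_self_eq_neg_id {𝕜 M : Type*} [Field 𝕜] [LinearOrder 𝕜]
    [IsStrictOrderedRing 𝕜] [AddCommGroup M] [Module 𝕜 M]
    (T : M →ₗ[𝕜] M) (hT : T ∘ₗ T = -LinearMap.id) : Even (Module.finrank 𝕜 M) := by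
  have hdet : LinearMap.det T * LinearMap.det T = (-1 : 𝕜) ^ Module.finrank 𝕜 M := by
    rw [← LinearMap.det_comp, hT, ← neg_one_smul 𝕜 LinearMap.id, LinearMap.det_smul,
      LinearMap.det_id, mul_one]
  by_contra hodd
  rw [(Nat.not_even_iff_odd.mp hodd).neg_one_pow] at hdet
  nlinarith [mul_self_nonneg (LinearMap.det T)]

section RealInnerProductSpace

variable {E : Type*} [NormedAddCommGroup E] [InnerProductSpace ℝ E]

theorem inner_map_left_eq_neg_of_map_map_eq_neg {J : E →ₗ[ℝ] E} (hJ2 : ∀ x, J (J x) = -x)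
    (hJinner : ∀ x y, ⟪J x, J y⟫ = ⟪x, y⟫) (x y : E) : ⟪J x, y⟫ = -⟪x, J y⟫ := by
  rw [← hJinner x (J y), hJ2, inner_neg_right, neg_neg]

theorem map_map_eq_neg_of_inner_map_left_eq_neg {J : E →ₗ[ℝ] E}
    (hskew : ∀ x y, ⟪J x, y⟫ = -⟪x, J y⟫) (hJinner : ∀ x y, ⟪J x, J y⟫ = ⟪x, y⟫) (x : E) :
    J (J x) = -x :=
  ext_inner_right ℝ fun y => by rw [hskew, hJinner, inner_neg_left]

theorem inner_smul_inv_map_map_of_norm_map_eq_mul {T : E →ₗ[ℝ] E} {c : ℝ} (hc : c ≠ 0)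
    (hT : ∀ x, ‖T x‖ = c * ‖x‖) (x y : E) : ⟪(c⁻¹ • T) x, (c⁻¹ • T) y⟫ = ⟪x, y⟫ := by
  refine (LinearMap.norm_map_iff_inner_map_map (c⁻¹ • T)).mp (fun x => ?_) x y
  have habs : ‖T x‖ = |c| * ‖x‖ := by
    rw [← abs_norm, hT, abs_mul, abs_norm]
  rw [LinearMap.smul_apply, norm_smul, habs, Real.norm_eq_abs, abs_inv,
    inv_mul_cancel_left₀ (abs_ne_zero.mpr hc)]

noncomputable def Submodule.compression (K : Submodule ℝ E) [K.HasOrthogonalProjection]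
    (J : E →ₗ[ℝ] E) : K →ₗ[ℝ] K :=
  K.orthogonalProjectionOnto.toLinearMap ∘ₗ J ∘ₗ K.subtype

theorem Submodule.compression_apply (K : Submodule ℝ E) [K.HasOrthogonalProjection]
    (J : E →ₗ[ℝ] E) (x : K) : K.compression J x = K.orthogonalProjectionOnto (J x) :=
  rfl

theorem Submodule.inner_compression_left_eq_neg (K : Submodule ℝ E) [K.HasOrthogonalProjection]
    {J : E →ₗ[ℝ] E} (hskew : ∀ x y, ⟪J x, y⟫ = -⟪x, J y⟫) (x y : K) :
    ⟪K.compression J x, y⟫ = -⟪x, K.compression J y⟫ := by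
  rw [compression_apply, compression_apply, inner_orthogonalProjectionOnto_eq_of_mem_right,
    inner_orthogonalProjectionOnto_eq_of_mem_left]
  exact hskew x y

end RealInnerProductSpace

/-- An `α`-slant subspace `V` of `ℝ^{2m}` (with `cos α ≠ 0`) carries a
compatible complex structure `J_V = sec α · (π_V ∘ J₀|_V)`; in particular `dim V`
is even. -/
theorem slant_subspace_induced_complex_structure
    {m : ℕ}
    (J₀ : EuclideanSpace ℝ (Fin (2 * m)) →ₗ[ℝ] EuclideanSpace ℝ (Fin (2 * m)))
    (hJ2 : ∀ x, J₀ (J₀ x) = -x)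
    (hJinner : ∀ x y, ⟪J₀ x, J₀ y⟫ = ⟪x, y⟫)
    (V : Submodule ℝ (EuclideanSpace ℝ (Fin (2 * m))))
    (α : ℝ) (hα : Real.cos α ≠ 0)
    (hslant : ∀ x : V, ‖(Submodule.orthogonalProjectionOnto V (J₀ (x : EuclideanSpace ℝ (Fin (2 * m)))) : V)‖
      = Real.cos α * ‖x‖)
    (JV : V → V)
    (hJV : ∀ x : V,
      JV x = (Real.cos α)⁻¹ •
        (Submodule.orthogonalProjectionOnto V (J₀ (x : EuclideanSpace ℝ (Fin (2 * m)))) : V)) :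
    (∀ x : V, JV (JV x) = -x) ∧ (∀ x y : V, ⟪JV x, JV y⟫ = ⟪x, y⟫) ∧
      Even (Module.finrank ℝ V) := by
  set T := (Real.cos α)⁻¹ • V.compression J₀
  have hJVT : JV = T := funext hJV
  have hPskew := V.inner_compression_left_eq_neg
    (inner_map_left_eq_neg_of_map_map_eq_neg hJ2 hJinner)
  have hTinner : ∀ x y, ⟪T x, T y⟫ = ⟪x, y⟫ :=
    inner_smul_inv_map_map_of_norm_map_eq_mul hα hslant
  have hTskew : ∀ x y, ⟪T x, y⟫ = -⟪x, T y⟫ := fun x y => by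
    simp only [T, LinearMap.smul_apply, real_inner_smul_left, real_inner_smul_right, hPskew,
      mul_neg]
  have hT2 := map_map_eq_neg_of_inner_map_left_eq_neg hTskew hTinner
  subst hJVT
  exact ⟨hT2, hTinner, even_finrank_of_comp_self_eq_neg_id T (LinearMap.ext hT2)⟩
end

section
/- Any subspace V of a real inner product space V' with compatible complex structure J that satisfies the slant condition ‖π_V(JX)‖ = cos(α)·‖X‖ for all X ∈ V with cos α ≠ 0 has even dimension. -/
open scoped RealInnerProductSpace

/-!
On `V` consider the tangential part `T = π_V ∘ J` of `J`. Since `J` is orthogonal with `J² = -1`,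
it is skew-adjoint, hence so is `T`; and by polarization the slant condition says that
`⟪T x, T y⟫ = cos² α ⟪x, y⟫`. Together these give `T² = -cos² α`, so
`(det T)² = (-cos² α) ^ dim V`, which forces `dim V` to be even as soon as `cos α ≠ 0`.
-/

theorem LinearMap.inner_map_map_of_norm_map_eq_mul {E F : Type*}
    [NormedAddCommGroup E] [InnerProductSpace ℝ E] [NormedAddCommGroup F] [InnerProductSpace ℝ F]
    (T : E →ₗ[ℝ] F) {c : ℝ} (hT : ∀ x, ‖T x‖ = c * ‖x‖) (x y : E) :
    ⟪T x, T y⟫ = c ^ 2 * ⟪x, y⟫ := by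
  rw [real_inner_eq_norm_add_mul_self_sub_norm_mul_self_sub_norm_mul_self_div_two,
    real_inner_eq_norm_add_mul_self_sub_norm_mul_self_sub_norm_mul_self_div_two x y, ← map_add,
    hT, hT, hT]
  ring

theorem LinearMap.even_finrank_of_comp_self_eq_neg_smul_id {K M : Type*}
    [Field K] [LinearOrder K] [IsStrictOrderedRing K] [AddCommGroup M] [Module K M]
    [FiniteDimensional K M] (T : M →ₗ[K] M) {a : K} (ha : 0 < a)
    (hT : T ∘ₗ T = -a • LinearMap.id) : Even (Module.finrank K M) := by
  by_contra hodd
  rw [Nat.not_even_iff_odd] at hodd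
  have hdet := congrArg LinearMap.det hT
  rw [LinearMap.det_comp, LinearMap.det_smul, LinearMap.det_id, mul_one, hodd.neg_pow] at hdet
  nlinarith [mul_self_nonneg (LinearMap.det T), pow_pos ha (Module.finrank K M)]

section

variable {E : Type*} [NormedAddCommGroup E] [InnerProductSpace ℝ E]

theorem inner_map_left_eq_neg_inner_map_right (J : E → E) (hJ2 : ∀ x, J (J x) = -x)
    (hJinner : ∀ x y, ⟪J x, J y⟫ = ⟪x, y⟫) (x y : E) : ⟪J x, y⟫ = -⟪x, J y⟫ := by
  rw [← hJinner x (J y), hJ2, inner_neg_right, neg_neg]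

theorem LinearMap.comp_self_eq_neg_sq_smul_id_of_skew (T : E →ₗ[ℝ] E)
    (hskew : ∀ x y, ⟪T x, y⟫ = -⟪x, T y⟫) {c : ℝ} (hT : ∀ x, ‖T x‖ = c * ‖x‖) :
    T ∘ₗ T = -(c ^ 2) • LinearMap.id := by
  ext x
  refine ext_inner_right ℝ fun y => ?_
  rw [LinearMap.comp_apply, hskew, T.inner_map_map_of_norm_map_eq_mul hT, LinearMap.smul_apply,
    LinearMap.id_apply, real_inner_smul_left, neg_mul]

namespace Submodule

variable (V : Submodule ℝ E) [V.HasOrthogonalProjection]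

noncomputable def compression_s3 (J : E →ₗ[ℝ] E) : V →ₗ[ℝ] V :=
  V.orthogonalProjectionOnto.toLinearMap ∘ₗ J ∘ₗ V.subtype

theorem inner_compression_apply (J : E →ₗ[ℝ] E) (x y : V) :
    ⟪V.compression_s3 J x, y⟫ = ⟪J x, y⟫ :=
  V.inner_orthogonalProjectionOnto_eq_of_mem_right y (J x)

theorem compression_skew {J : E →ₗ[ℝ] E} (hJ : ∀ u v, ⟪J u, v⟫ = -⟪u, J v⟫) (x y : V) :
    ⟪V.compression_s3 J x, y⟫ = -⟪x, V.compression_s3 J y⟫ := by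
  rw [← real_inner_comm x, inner_compression_apply, inner_compression_apply, hJ, real_inner_comm]

end Submodule

end

/-- A slant subspace (with `cos α ≠ 0`) of a real inner product space
with compatible complex structure has even dimension. -/
theorem slant_subspace_even_dimensional
    {V' : Type*} [NormedAddCommGroup V'] [InnerProductSpace ℝ V'] [FiniteDimensional ℝ V']
    (J : V' →ₗ[ℝ] V')
    (hJ2 : ∀ x : V', J (J x) = -x)
    (hJinner : ∀ x y : V', ⟪J x, J y⟫ = ⟪x, y⟫)
    (V : Submodule ℝ V')
    (α : ℝ) (hα : Real.cos α ≠ 0)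
    (hslant : ∀ x : V, ‖(V.orthogonalProjectionOnto (J (x : V')) : V)‖ = Real.cos α * ‖x‖) :
    Even (Module.finrank ℝ V) := by
  have hskew := V.compression_skew (inner_map_left_eq_neg_inner_map_right J hJ2 hJinner)
  have hsquare := (V.compression_s3 J).comp_self_eq_neg_sq_smul_id_of_skew hskew hslant
  exact (V.compression_s3 J).even_finrank_of_comp_self_eq_neg_smul_id (by positivity) hsquare
end

section
/- Let N be a proper slant submanifold of a Kaehler manifold M (slant angle θ with 0 < θ < π/2), with F the normal-valued part of J on TN. If ∇F = 0, then N is austere: for each unit tangent eigenvector X of Q = P² with eigenvalue λ ≠ 0, setting X* = PX/√(-λ), one has h(X,X) = -h(X*, X*). In particular N is minimal. -/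
/-! The Kaehler form of `∇F = 0` says `f h(X,Y) = h(X,PY)`; since `h` is symmetric, the left side
is symmetric in `X, Y`, so `P` is self-adjoint for `h`. Hence `h(PX,PX) = h(X,P²X) = λ h(X,X)`,
and for `X ≠ 0` the eigenvalue is `λ = -cos² θ`, so `λ ≠ 0` forces `λ < 0`; dividing by `-λ`
gives `h(X*,X*) = -h(X,X)`. -/

section SecondFundamentalForm

variable {M N : Type*} [AddCommGroup M] [Module ℝ M] [AddCommGroup N] [Module ℝ N]
  {h : M →ₗ[ℝ] M →ₗ[ℝ] N} {P : M →ₗ[ℝ] M}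

theorem apply_map_left_eq_apply_map_right {f : N →ₗ[ℝ] N}
    (hsymm : ∀ X Y, h X Y = h Y X) (hF : ∀ X Y, f (h X Y) = h X (P Y)) (X Y : M) :
    h (P X) Y = h X (P Y) :=
  calc h (P X) Y = h Y (P X) := hsymm _ _
    _ = f (h Y X) := (hF Y X).symm
    _ = f (h X Y) := by rw [hsymm]
    _ = h X (P Y) := hF X Y

theorem apply_map_map_eq_smul_of_eigen (hP : ∀ X Y, h (P X) Y = h X (P Y)) {X : M} {lam : ℝ}
    (heig : P (P X) = lam • X) : h (P X) (P X) = lam • h X X := by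
  rw [hP, heig, map_smul]

theorem apply_self_eq_neg_apply_inv_sqrt_smul {X : M} {lam : ℝ} (hlam : lam < 0)
    (hX : h (P X) (P X) = lam • h X X) :
    h X X = -h ((Real.sqrt (-lam))⁻¹ • P X) ((Real.sqrt (-lam))⁻¹ • P X) := by
  have hscale : (Real.sqrt (-lam))⁻¹ * ((Real.sqrt (-lam))⁻¹ * lam) = -1 := by
    rw [← mul_assoc, ← mul_inv, Real.mul_self_sqrt (by linarith), inv_neg, neg_mul,
      inv_mul_cancel₀ hlam.ne]
  simp only [map_smul, LinearMap.smul_apply, hX, smul_smul, hscale, neg_one_smul, neg_neg]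

end SecondFundamentalForm

theorem parallel_F_implies_austere_general
    {𝒯 𝒩 : Type*} [NormedAddCommGroup 𝒯] [InnerProductSpace ℝ 𝒯]
    [AddCommGroup 𝒩] [Module ℝ 𝒩]
    (P : 𝒯 →ₗ[ℝ] 𝒯) (h : 𝒯 →ₗ[ℝ] 𝒯 →ₗ[ℝ] 𝒩) (f : 𝒩 →ₗ[ℝ] 𝒩)
    (hhsymm : ∀ X Y : 𝒯, h X Y = h Y X)
    (θ : ℝ)
    (hP2 : ∀ Y : 𝒯, P (P Y) = -(Real.cos θ ^ 2) • Y)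
    -- ∇F = 0, in its Kaehler-equivalent form
    (hF : ∀ X Y : 𝒯, f (h X Y) = h X (P Y))
    (X : 𝒯) (lam : ℝ) (hlam : lam ≠ 0)
    (heig : P (P X) = lam • X) :
    h X X = -(h ((Real.sqrt (-lam))⁻¹ • P X) ((Real.sqrt (-lam))⁻¹ • P X)) := by
  rcases eq_or_ne X 0 with rfl | hX0
  · simp
  have hlam_eq : lam = -(Real.cos θ ^ 2) := smul_left_injective ℝ hX0 (heig.symm.trans (hP2 X))
  have hlam_neg : lam < 0 := lt_of_le_of_ne (hlam_eq ▸ neg_nonpos.mpr (sq_nonneg _)) hlam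
  exact apply_self_eq_neg_apply_inv_sqrt_smul hlam_neg
    (apply_map_map_eq_smul_of_eigen (apply_map_left_eq_apply_map_right hhsymm hF) heig)

/-- A proper slant submanifold of a Kaehler manifold with `∇F = 0`
is austere: presented pointwise/abstractly, with `P` the tangential part of `J`,
`h` the (symmetric bilinear) second fundamental form, `f` the normal part of `J`
on the normal bundle, and the condition `∇F = 0` in its Kaehler form
`f h(X,Y) = h(X,PY)`, every unit eigenvector `X` of `Q = P²` with eigenvalue
`λ ≠ 0` satisfies `h(X,X) = -h(X*,X*)` for `X* = PX/√(-λ)`.  In particular `N`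
is minimal. -/
theorem parallel_F_implies_austere
    {𝒯 𝒩 : Type*} [NormedAddCommGroup 𝒯] [InnerProductSpace ℝ 𝒯]
    [AddCommGroup 𝒩] [Module ℝ 𝒩]
    (P : 𝒯 →ₗ[ℝ] 𝒯) (h : 𝒯 →ₗ[ℝ] 𝒯 →ₗ[ℝ] 𝒩) (f : 𝒩 →ₗ[ℝ] 𝒩)
    (hhsymm : ∀ X Y : 𝒯, h X Y = h Y X)
    -- proper slant with slant angle θ, 0 < θ < π/2
    (θ : ℝ) (hθ : 0 < θ ∧ θ < Real.pi / 2)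
    (hP2 : ∀ Y : 𝒯, P (P Y) = -(Real.cos θ ^ 2) • Y)
    -- ∇F = 0, in its Kaehler-equivalent form
    (hF : ∀ X Y : 𝒯, f (h X Y) = h X (P Y))
    -- a unit eigenvector of Q = P² with eigenvalue λ ≠ 0
    (X : 𝒯) (hX : ‖X‖ = 1) (lam : ℝ) (hlam : lam ≠ 0)
    (heig : P (P X) = lam • X) :
    h X X = -(h ((Real.sqrt (-lam))⁻¹ • P X) ((Real.sqrt (-lam))⁻¹ • P X)) :=
  parallel_F_implies_austere_general P h f hhsymm θ hP2 hF X lam hlam heig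
end
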